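/- arXiv:2008.12081 — 2 statements merged into one kernel-verified Lean document; each statement's English description precedes it below -/
import Mathlib

section
/- The logarithmic derivative of a lower-triangular unipotent matrix over a differential field is strictly lower triangular, and the logarithmic derivative of an invertible diagonal matrix is diagonal. More generally, for a linear algebraic group G ⊆ GLₙ defined over the constants, ℓδ maps G(F) into the Lie algebra 𝔤(F). -/
/-!
A derivation kills `0` and `1`, so applying it entrywise to a lower unitriangular `u` gives a
strictly lower triangular matrix, and multiplying on the right by the lower triangular `u⁻¹`
keeps it so. Diagonal matrices are closed under entrywise `∂`, inversion and products.
-/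

open Matrix OrderDual

lemma map_zero_of_map_add {G : Type*} [AddGroup G] {D : G → G}
    (hadd : ∀ a b : G, D (a + b) = D a + D b) : D 0 = 0 :=
  (AddMonoidHom.mk' D hadd).map_zero

lemma map_one_eq_zero_of_leibniz {R : Type*} [Ring R] {D : R → R}
    (hmul : ∀ a b : R, D (a * b) = a * D b + D a * b) : D 1 = 0 := by
  simpa using hmul 1 1

namespace Matrix

variable {m R : Type*}

theorem BlockTriangular.inv [Fintype m] [DecidableEq m] {α : Type*} [LinearOrder α] [CommRing R]
    {M : Matrix m m R} {b : m → α} (hM : M.BlockTriangular b) : M⁻¹.BlockTriangular b := by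
  by_cases hdet : IsUnit M.det
  · have := M.invertibleOfIsUnitDet hdet
    exact blockTriangular_inv_of_blockTriangular hM
  · rw [nonsing_inv_apply_not_isUnit M hdet]
    exact blockTriangular_zero

theorem mul_apply_eq_zero_of_strictlyLower [Fintype m] [LinearOrder m]
    [NonUnitalNonAssocSemiring R] {A B : Matrix m m R} (hA : ∀ i j, i ≤ j → A i j = 0)
    (hB : B.IsLowerTriangular) {i j : m} (hij : i ≤ j) : (A * B) i j = 0 := by
  rw [mul_apply]
  refine Finset.sum_eq_zero fun k _ => ?_
  rcases le_or_gt i k with hik | hki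
  · rw [hA i k hik, zero_mul]
  · rw [hB (show toDual j < toDual k from hki.trans_le hij), mul_zero]

theorem map_apply_eq_zero_of_unitriangular [LinearOrder m] [Zero R] [One R] {u : Matrix m m R}
    (hu : u.IsLowerTriangular) (hdiag : ∀ i, u i i = 1) {f : R → R} (hf₀ : f 0 = 0)
    (hf₁ : f 1 = 0) {i j : m} (hij : i ≤ j) : u.map f i j = 0 := by
  rcases hij.lt_or_eq with hlt | rfl
  · rw [map_apply, hu (show toDual j < toDual i from hlt), hf₀]
  · rw [map_apply, hdiag, hf₁]

open scoped Ring in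
theorem diagonal_map_mul_inv_diagonal [Fintype m] [DecidableEq m] [CommRing R] (d : m → R)
    {f : R → R} (hf : f 0 = 0) :
    (diagonal d).map f * (diagonal d)⁻¹ = diagonal ((f ∘ d) * d⁻¹ʳ) := by
  rw [diagonal_map hf, inv_diagonal, diagonal_mul_diagonal]
  rfl

end Matrix

/-- The logarithmic derivative `ℓδ(g) = ∂(g)·g⁻¹` maps a linear algebraic group
into its Lie algebra; concretely: `ℓδ` of a lower-triangular unipotent matrix is
strictly lower triangular, and `ℓδ` of an invertible diagonal matrix is diagonal. -/
theorem logDeriv_into_lieAlgebra {F : Type*} [Field F] (D : F → F)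
    (hadd : ∀ a b : F, D (a + b) = D a + D b)
    (hmul : ∀ a b : F, D (a * b) = a * D b + D a * b) {n : ℕ} :
    (∀ u : Matrix (Fin n) (Fin n) F,
        (∀ i j : Fin n, i < j → u i j = 0) → (∀ i, u i i = 1) →
        ∀ i j : Fin n, i ≤ j → ((u.map D) * u⁻¹) i j = 0) ∧
    (∀ d : Fin n → F, (∀ i, d i ≠ 0) →
        ∀ i j : Fin n, i ≠ j →
          (((Matrix.diagonal d).map D) * (Matrix.diagonal d)⁻¹) i j = 0) := by
  have hD₀ := map_zero_of_map_add hadd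
  have hD₁ := map_one_eq_zero_of_leibniz hmul
  refine ⟨fun u hlow hdiag i j hij => ?_, fun d _ i j hij => ?_⟩
  · have hu : u.IsLowerTriangular := fun a b h => hlow a b h
    exact mul_apply_eq_zero_of_strictlyLower
      (fun a b => map_apply_eq_zero_of_unitriangular hu hdiag hD₀ hD₁) hu.inv hij
  · rw [diagonal_map_mul_inv_diagonal d hD₀, diagonal_apply_ne _ hij]
end

section
/- In 𝔰𝔩₄ over a field of characteristic 0, with Xᵢ = Eᵢ₊₁,ᵢ (i = 1,2,3) the standard negative simple root vectors, the logarithmic derivative of the product u₁(η₁)u₂(η₂)u₃(η₃) = (I+η₁X₁)(I+η₂X₂)(I+η₃X₃) over a differential field F is η₁′X₁ + η₂′X₂ + η₃′X₃ - η₁η₂′·E₃₁ - η₂η₃′·E₄₂ + (η₁η₂η₃′)·E₄₁, for any η₁, η₂, η₃ ∈ F. -/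
/-!
Each factor `1 + ηᵢ • Xᵢ` is a transvection, whose logarithmic derivative is `ηᵢ′ • Xᵢ`
because `Xᵢ² = 0`. The logarithmic derivative turns products into twisted sums,
`ℓδ(AB) = ℓδ(A) + A ℓδ(B) A⁻¹`, so the claim reduces to conjugating matrix units by
transvections: `(1 + a E_ij) E_ki (1 + a E_ij)⁻¹ = E_ki - a E_kj` for `j ≠ k`, while `E_kl`
commutes with `E_ij` when moreover `l ≠ i`. The cross terms `E₃₁, E₄₂, E₄₁` arise this way.
-/

/-- the 4×4 matrix unit `Eᵢⱼ` -/
def E4 {F : Type*} [Field F] (i j : Fin 4) : Matrix (Fin 4) (Fin 4) F :=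
  Matrix.single i j 1

theorem map_one_of_leibniz {R : Type*} [Ring R] {D : R → R}
    (hmul : ∀ a b, D (a * b) = a * D b + D a * b) : D 1 = 0 := by
  simpa using hmul 1 1

namespace Matrix

variable {n R : Type*}

theorem map_mul_of_leibniz [Fintype n] [Ring R] {D : R → R}
    (hadd : ∀ a b, D (a + b) = D a + D b) (hmul : ∀ a b, D (a * b) = a * D b + D a * b)
    (A B : Matrix n n R) :
    (A * B).map D = A.map D * B + A * B.map D := by
  ext i j
  have hsum := map_sum (AddMonoidHom.mk' D hadd) (fun k => A i k * B k j) Finset.univ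
  simp only [AddMonoidHom.mk'_apply] at hsum
  simp [mul_apply, hsum, hmul, Finset.sum_add_distrib, add_comm]

/-- The paper's `ℓδ(A) = ∂(A)·A⁻¹`, with `∂` acting entrywise. -/
noncomputable def logDeriv [Fintype n] [DecidableEq n] [CommRing R] (D : R → R)
    (A : Matrix n n R) : Matrix n n R :=
  A.map D * A⁻¹

theorem logDeriv_mul [Fintype n] [DecidableEq n] [CommRing R] {D : R → R}
    (hadd : ∀ a b, D (a + b) = D a + D b) (hmul : ∀ a b, D (a * b) = a * D b + D a * b)
    (A : Matrix n n R) {B : Matrix n n R} (hB : IsUnit B.det) :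
    (A * B).logDeriv D = A.logDeriv D + A * B.logDeriv D * A⁻¹ := by
  simp only [Matrix.logDeriv, map_mul_of_leibniz hadd hmul, Matrix.mul_inv_rev, Matrix.add_mul,
    Matrix.mul_assoc, mul_nonsing_inv_cancel_left _ _ hB]

theorem transvection_inv [Fintype n] [DecidableEq n] [CommRing R] {i j : n} (h : i ≠ j)
    (c : R) : (transvection i j c)⁻¹ = transvection i j (-c) :=
  inv_eq_right_inv (by
    rw [transvection_mul_transvection_same i j h, add_neg_cancel, transvection_zero])

theorem map_transvection [DecidableEq n] [CommRing R] {D : R → R}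
    (hadd : ∀ a b, D (a + b) = D a + D b) (hmul : ∀ a b, D (a * b) = a * D b + D a * b)
    (i j : n) (c : R) :
    (transvection i j c).map D = single i j (D c) := by
  have hD₀ : D 0 = 0 := (AddMonoidHom.mk' D hadd).map_zero
  have hD₁ : D 1 = 0 := map_one_of_leibniz hmul
  ext k l
  simp only [transvection, map_apply, add_apply, one_apply, single_apply]
  split_ifs <;> simp [hadd, hD₀, hD₁]

theorem logDeriv_transvection [Fintype n] [DecidableEq n] [CommRing R] {D : R → R}
    (hadd : ∀ a b, D (a + b) = D a + D b) (hmul : ∀ a b, D (a * b) = a * D b + D a * b)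
    {i j : n} (h : i ≠ j) (c : R) :
    (transvection i j c).logDeriv D = single i j (D c) := by
  rw [Matrix.logDeriv, map_transvection hadd hmul, transvection_inv h, transvection,
    Matrix.mul_add, single_mul_single_of_ne (h := h.symm), add_zero, Matrix.mul_one]

theorem transvection_conj_single_of_ne [Fintype n] [DecidableEq n] [CommRing R]
    {i j k l : n} (hij : i ≠ j) (hjk : j ≠ k) (hli : l ≠ i) (a c : R) :
    transvection i j a * single k l c * (transvection i j a)⁻¹ = single k l c := by
  rw [transvection_inv hij, transvection, transvection, Matrix.add_mul, Matrix.one_mul,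
    single_mul_single_of_ne (h := hjk), add_zero, Matrix.mul_add, Matrix.mul_one,
    single_mul_single_of_ne (h := hli), add_zero]

theorem transvection_conj_single_of_eq [Fintype n] [DecidableEq n] [CommRing R]
    {i j k : n} (hij : i ≠ j) (hjk : j ≠ k) (a c : R) :
    transvection i j a * single k i c * (transvection i j a)⁻¹ =
      single k i c - single k j (a * c) := by
  rw [transvection_inv hij, transvection, transvection, Matrix.add_mul, Matrix.one_mul,
    single_mul_single_of_ne (h := hjk), add_zero, Matrix.mul_add, Matrix.mul_one,
    single_mul_single_same, mul_neg, ← single_neg, mul_comm c a, ← sub_eq_add_neg]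

end Matrix

/-- In `𝔰𝔩₄` over a differential field, with `Xᵢ = Eᵢ₊₁,ᵢ` the negative simple root
vectors and `uᵢ(η) = I + η·Xᵢ`, the logarithmic derivative of `u₁(η₁)u₂(η₂)u₃(η₃)`
equals `η₁′X₁ + η₂′X₂ + η₃′X₃ - η₁η₂′·E₃₁ - η₂η₃′·E₄₂ + η₁η₂η₃′·E₄₁`. -/
theorem logDeriv_sl4_unipotent_product {F : Type*} [Field F] (D : F → F)
    (hadd : ∀ a b : F, D (a + b) = D a + D b)
    (hmul : ∀ a b : F, D (a * b) = a * D b + D a * b)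
    (η₁ η₂ η₃ : F) :
    (((1 + η₁ • E4 1 0) * (1 + η₂ • E4 2 1) * (1 + η₃ • E4 3 2) :
        Matrix (Fin 4) (Fin 4) F).map D) *
      ((1 + η₁ • E4 1 0) * (1 + η₂ • E4 2 1) * (1 + η₃ • E4 3 2) :
        Matrix (Fin 4) (Fin 4) F)⁻¹ =
    D η₁ • E4 1 0 + D η₂ • E4 2 1 + D η₃ • E4 3 2 -
      (η₁ * D η₂) • E4 2 0 - (η₂ * D η₃) • E4 3 1 + (η₁ * η₂ * D η₃) • E4 3 0 := by
  have hE : ∀ (i j : Fin 4) (c : F), c • E4 i j = Matrix.single i j c := fun i j c => by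
    simp [E4, Matrix.smul_single]
  have hu : ∀ (i j : Fin 4) (c : F), 1 + Matrix.single i j c = Matrix.transvection i j c :=
    fun _ _ _ => rfl
  have hdet : ∀ (i j : Fin 4) (c : F), i ≠ j → IsUnit (Matrix.transvection i j c).det :=
    fun i j c h => by simp [Matrix.det_transvection_of_ne _ _ h]
  simp only [hE, hu, Matrix.mul_assoc]
  change (Matrix.transvection (1 : Fin 4) 0 η₁ *
      (Matrix.transvection 2 1 η₂ * Matrix.transvection 3 2 η₃)).logDeriv D = _
  rw [Matrix.logDeriv_mul hadd hmul _ (by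
      rw [Matrix.det_mul]; exact (hdet 2 1 η₂ (by decide)).mul (hdet 3 2 η₃ (by decide))),
    Matrix.logDeriv_mul hadd hmul _ (hdet 3 2 η₃ (by decide)),
    Matrix.logDeriv_transvection hadd hmul (by decide),
    Matrix.logDeriv_transvection hadd hmul (by decide),
    Matrix.logDeriv_transvection hadd hmul (by decide),
    Matrix.transvection_conj_single_of_eq (by decide) (by decide)]
  simp only [Matrix.mul_add, Matrix.add_mul, Matrix.mul_sub, Matrix.sub_mul]
  rw [Matrix.transvection_conj_single_of_eq (by decide) (by decide),
    Matrix.transvection_conj_single_of_ne (by decide) (by decide) (by decide),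
    Matrix.transvection_conj_single_of_eq (by decide) (by decide), mul_assoc]
  abel
end
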